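/- A group G endowed with a coarse structure E is a coarse group if and only if there exists an invariant group ideal I on G such that E = E_I. -/

import Mathlib

/-- A *coarse structure* on `X`: every entourage contains the diagonal, and the family
is closed under composition, inversion, and passing to subsets containing the diagonal. -/
def IsCoarseStructure {X : Type*} (E : Set (Set (X × X))) : Prop :=
  (∀ ε ∈ E, ∀ x : X, (x, x) ∈ ε) ∧
  (∀ ε ∈ E, ∀ δ ∈ E, {p : X × X | ∃ z : X, (p.1, z) ∈ ε ∧ (z, p.2) ∈ δ} ∈ E) ∧
  (∀ ε ∈ E, {p : X × X | (p.2, p.1) ∈ ε} ∈ E) ∧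
  (∀ ε ∈ E, ∀ ε' ⊆ ε, (∀ x : X, (x, x) ∈ ε') → ε' ∈ E)

/-- A family `I` of subsets of a group `G` is a *group ideal*. -/
def IsGroupIdeal {G : Type*} [Group G] (I : Set (Set G)) : Prop :=
  (∀ A ∈ I, ∀ B ⊆ A, B ∈ I) ∧
  (∀ A ∈ I, ∀ B ∈ I, A ∪ B ∈ I) ∧
  (∀ A : Set G, A.Finite → A ∈ I) ∧
  (∀ A ∈ I, ∀ B ∈ I, {x : G | ∃ a ∈ A, ∃ b ∈ B, x = a * b⁻¹} ∈ I)

/-- The entourage `ε_A = {(x, g•x) : x ∈ X, g ∈ A}` determined by `A ⊆ G`. -/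
def entourageOf {G X : Type*} [Group G] [MulAction G X] (A : Set G) : Set (X × X) :=
  {p : X × X | ∃ g ∈ A, p.2 = g • p.1}

/-- The coarse structure `E(G, I, X)` induced on a `G`-space `X` by a group ideal `I`:
all diagonal-containing subsets of some `ε_A` with `A ∈ I`, `1 ∈ A`. -/
def actionCoarse (G : Type*) [Group G] (I : Set (Set G)) (X : Type*) [MulAction G X] :
    Set (Set (X × X)) :=
  {ε | (∀ x : X, (x, x) ∈ ε) ∧ ∃ A ∈ I, (1 : G) ∈ A ∧ ε ⊆ entourageOf A}

/-- `E_I`: the coarse structure on `G` induced by the left action of `G` on itself. -/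
def idealCoarse {G : Type*} [Group G] (I : Set (Set G)) : Set (Set (G × G)) :=
  actionCoarse G I G

/-- The ball `B(x, ε)`. -/
def ball {X : Type*} (ε : Set (X × X)) (x : X) : Set X := {y : X | (x, y) ∈ ε}


/-- `f` is a *coarse (bornologous) mapping* from `(X, EX)` to `(Y, EY)`. -/
def IsCoarseMap {X Y : Type*} (EX : Set (Set (X × X))) (EY : Set (Set (Y × Y)))
    (f : X → Y) : Prop :=
  ∀ ε ∈ EX, ∃ δ ∈ EY, ∀ p ∈ ε, (f p.1, f p.2) ∈ δ

/-- The product coarse structure on `X × Y`, with base the componentwise products of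
entourages. -/
def prodCoarse {X Y : Type*} (EX : Set (Set (X × X))) (EY : Set (Set (Y × Y))) :
    Set (Set ((X × Y) × (X × Y))) :=
  {η | (∀ q : X × Y, (q, q) ∈ η) ∧ ∃ ε ∈ EX, ∃ δ ∈ EY,
    η ⊆ {p : (X × Y) × (X × Y) | (p.1.1, p.2.1) ∈ ε ∧ (p.1.2, p.2.2) ∈ δ}}

/-- `(G, E)` is a *coarse group*: the multiplication and inversion are coarse maps. -/
def IsCoarseGroup {G : Type*} [Group G] (E : Set (Set (G × G))) : Prop :=
  IsCoarseMap (prodCoarse E E) E (fun p => p.1 * p.2) ∧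
  IsCoarseMap E E (fun x : G => x⁻¹)

/-- `(G, E)` is a *left coarse group*. -/
def IsLeftCoarseGroup {G : Type*} [Group G] (E : Set (Set (G × G))) : Prop :=
  ∀ ε ∈ E, ∃ ε' ∈ E, ∀ g x y : G, (x, y) ∈ ε → (g * x, g * y) ∈ ε'

/-- `(G, E)` is a *right coarse group*. -/
def IsRightCoarseGroup {G : Type*} [Group G] (E : Set (Set (G × G))) : Prop :=
  ∀ ε ∈ E, ∃ ε' ∈ E, ∀ g x y : G, (x, y) ∈ ε → (x * g, y * g) ∈ ε'

/-- A coarse structure is *connected* if any two points are related by some entourage. -/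
def IsConnectedCoarse {X : Type*} (E : Set (Set (X × X))) : Prop :=
  ∀ x y : X, ∃ ε ∈ E, (x, y) ∈ ε

/-- A group ideal `I` is *invariant* if `⋃_{g ∈ G} g⁻¹ A g ∈ I` for each `A ∈ I`. -/
def IsInvariantIdeal {G : Type*} [Group G] (I : Set (Set G)) : Prop :=
  ∀ A ∈ I, {x : G | ∃ g : G, ∃ a ∈ A, x = g⁻¹ * a * g} ∈ I

/-!
For a coarse group `(G, E)` the ideal is the family of sets bounded around the identity. Since
multiplication is coarse, left and right translations are uniformly coarse; right translations
turn every entourage into one generated by the differences `y x⁻¹` and make the ideal closed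
under `A B⁻¹`, and conjugation `g⁻¹ a g`, a left translate of a right translate, keeps it
invariant. Conversely, the factorisations `(a x)(b y) = a (x b x⁻¹) (x y)` and
`(a x)⁻¹ = (x⁻¹ a⁻¹ x) x⁻¹` show that multiplication and inversion are coarse for `E_I` as soon
as `I` is closed under conjugation.
-/

open scoped Pointwise

section CoarseStructure

variable {X : Type*} {E : Set (Set (X × X))}

theorem IsCoarseStructure.union_mem (hE : IsCoarseStructure E) {ε δ : Set (X × X)}
    (hε : ε ∈ E) (hδ : δ ∈ E) : ε ∪ δ ∈ E := by
  obtain ⟨hdiag, hcomp, -, hsub⟩ := hE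
  refine hsub _ (hcomp ε hε δ hδ) _ ?_ fun x => Or.inl (hdiag ε hε x)
  rintro ⟨x, y⟩ (h | h)
  · exact ⟨y, h, hdiag δ hδ y⟩
  · exact ⟨x, hdiag ε hε x, h⟩

theorem IsCoarseStructure.diagonal_mem (hE : IsCoarseStructure E) {ε : Set (X × X)}
    (hε : ε ∈ E) : {p : X × X | p.1 = p.2} ∈ E := by
  refine hE.2.2.2 ε hε _ ?_ fun _ => rfl
  rintro ⟨x, y⟩ (rfl : x = y)
  exact hE.1 ε hε x

end CoarseStructure

section Translations

variable {G : Type*} [Group G] {E : Set (Set (G × G))}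

theorem isLeftCoarseGroup_of_isCoarseMap_mul (hE : IsCoarseStructure E)
    (hmul : IsCoarseMap (prodCoarse E E) E (fun p => p.1 * p.2)) : IsLeftCoarseGroup E := by
  intro ε hε
  have hη : {p : (G × G) × (G × G) | p.1.1 = p.2.1 ∧ (p.1.2, p.2.2) ∈ ε} ∈ prodCoarse E E :=
    ⟨fun q => ⟨rfl, hE.1 ε hε q.2⟩, _, hE.diagonal_mem hε, ε, hε, fun _ hp => hp⟩
  obtain ⟨ε', hε', hcov⟩ := hmul _ hη
  exact ⟨ε', hε', fun g x y h => hcov ((g, x), (g, y)) ⟨rfl, h⟩⟩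

theorem isRightCoarseGroup_of_isCoarseMap_mul (hE : IsCoarseStructure E)
    (hmul : IsCoarseMap (prodCoarse E E) E (fun p => p.1 * p.2)) : IsRightCoarseGroup E := by
  intro ε hε
  have hη : {p : (G × G) × (G × G) | (p.1.1, p.2.1) ∈ ε ∧ p.1.2 = p.2.2} ∈ prodCoarse E E :=
    ⟨fun q => ⟨hE.1 ε hε q.1, rfl⟩, ε, hε, _, hE.diagonal_mem hε, fun _ hp => hp⟩
  obtain ⟨ε', hε', hcov⟩ := hmul _ hη
  exact ⟨ε', hε', fun g x y h => hcov ((x, g), (y, g)) ⟨h, rfl⟩⟩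

end Translations

section CoarseIdeal

variable {G : Type*} [Group G] {E : Set (Set (G × G))}

def coarseIdeal (E : Set (Set (G × G))) : Set (Set G) :=
  {A | ∃ ε ∈ E, A ⊆ ball ε 1}

theorem coarseIdeal_union (hE : IsCoarseStructure E) {A B : Set G}
    (hA : A ∈ coarseIdeal E) (hB : B ∈ coarseIdeal E) : A ∪ B ∈ coarseIdeal E := by
  obtain ⟨ε, hε, hAε⟩ := hA
  obtain ⟨δ, hδ, hBδ⟩ := hB
  exact ⟨ε ∪ δ, hE.union_mem hε hδ, Set.union_subset_union hAε hBδ⟩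

theorem finite_mem_coarseIdeal (hE : IsCoarseStructure E) (hc : IsConnectedCoarse E)
    {A : Set G} (hA : A.Finite) : A ∈ coarseIdeal E := by
  induction A, hA using Set.Finite.induction_on with
  | empty =>
    obtain ⟨ε, hε, -⟩ := hc 1 1
    exact ⟨ε, hε, Set.empty_subset _⟩
  | @insert a s _ _ hs =>
    obtain ⟨ε, hε, h1a⟩ := hc 1 a
    exact coarseIdeal_union hE ⟨ε, hε, Set.singleton_subset_iff.mpr h1a⟩ hs

theorem div_mem_coarseIdeal (hE : IsCoarseStructure E) (hr : IsRightCoarseGroup E)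
    {A B : Set G} (hA : A ∈ coarseIdeal E) (hB : B ∈ coarseIdeal E) :
    {x : G | ∃ a ∈ A, ∃ b ∈ B, x = a * b⁻¹} ∈ coarseIdeal E := by
  obtain ⟨ε, hε, hAε⟩ := hA
  obtain ⟨δ, hδ, hBδ⟩ := hB
  obtain ⟨ε', hε', hεr⟩ := hr ε hε
  obtain ⟨δ', hδ', hδr⟩ := hr δ hδ
  -- `1 ~ b⁻¹` by reversing `b⁻¹ ~ 1`, the translate of `1 ~ b`; then `b⁻¹ ~ a b⁻¹`.
  refine ⟨_, hE.2.1 _ (hE.2.2.1 δ' hδ') ε' hε', ?_⟩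
  rintro x ⟨a, ha, b, hb, rfl⟩
  refine ⟨b⁻¹, ?_, ?_⟩
  · simpa using hδr b⁻¹ 1 b (hBδ hb)
  · simpa using hεr b⁻¹ 1 a (hAε ha)

theorem isGroupIdeal_coarseIdeal (hE : IsCoarseStructure E) (hc : IsConnectedCoarse E)
    (hr : IsRightCoarseGroup E) : IsGroupIdeal (coarseIdeal E) :=
  ⟨fun _ ⟨ε, hε, hAε⟩ _ hBA => ⟨ε, hε, hBA.trans hAε⟩,
    fun _ hA _ hB => coarseIdeal_union hE hA hB,
    fun _ hA => finite_mem_coarseIdeal hE hc hA,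
    fun _ hA _ hB => div_mem_coarseIdeal hE hr hA hB⟩

theorem isInvariantIdeal_coarseIdeal (hl : IsLeftCoarseGroup E) (hr : IsRightCoarseGroup E) :
    IsInvariantIdeal (coarseIdeal E) := by
  rintro A ⟨ε, hε, hAε⟩
  obtain ⟨ε', hε', hεr⟩ := hr ε hε
  obtain ⟨ε'', hε'', hεl⟩ := hl ε' hε'
  refine ⟨ε'', hε'', ?_⟩
  rintro x ⟨g, a, ha, rfl⟩
  simpa [ball, mul_assoc] using hεl g⁻¹ _ _ (hεr g 1 a (hAε ha))

theorem idealCoarse_coarseIdeal (hE : IsCoarseStructure E) (hr : IsRightCoarseGroup E) :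
    idealCoarse (coarseIdeal E) = E := by
  ext ε
  constructor
  · rintro ⟨hεd, A, ⟨μ, hμ, hAμ⟩, -, hεA⟩
    obtain ⟨μ', hμ', hμr⟩ := hr μ hμ
    refine hE.2.2.2 μ' hμ' ε ?_ hεd
    rintro ⟨x, y⟩ hxy
    obtain ⟨a, ha, rfl : y = a * x⟩ := hεA hxy
    simpa using hμr x 1 a (hAμ ha)
  · intro hε
    obtain ⟨ε', hε', hεr⟩ := hr ε hε
    refine ⟨hE.1 ε hε, {z | ∃ x y : G, (x, y) ∈ ε ∧ z = y * x⁻¹}, ⟨ε', hε', ?_⟩,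
      ⟨1, 1, hE.1 ε hε 1, by simp⟩, ?_⟩
    · rintro z ⟨x, y, hxy, rfl⟩
      simpa [ball] using hεr x⁻¹ x y hxy
    · rintro ⟨x, y⟩ hxy
      exact ⟨y * x⁻¹, ⟨x, y, hxy, rfl⟩, by simp [smul_eq_mul]⟩

end CoarseIdeal

section IdealCoarse

variable {G : Type*} [Group G] {I : Set (Set G)}

theorem IsGroupIdeal.inv_mem (hI : IsGroupIdeal I) {A : Set G} (hA : A ∈ I) : A⁻¹ ∈ I := by
  refine hI.1 _ (hI.2.2.2 _ (hI.2.2.1 _ (Set.finite_singleton 1)) _ hA) _ ?_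
  intro x hx
  exact ⟨1, rfl, x⁻¹, hx, by simp⟩

theorem IsGroupIdeal.mul_mem (hI : IsGroupIdeal I) {A B : Set G} (hA : A ∈ I) (hB : B ∈ I) :
    A * B ∈ I := by
  refine hI.1 _ (hI.2.2.2 _ hA _ (hI.inv_mem hB)) _ ?_
  rintro _ ⟨a, ha, b, hb, rfl⟩
  exact ⟨a, ha, b⁻¹, by simpa using hb, by simp⟩

theorem entourageOf_mem_actionCoarse {X : Type*} [MulAction G X] {A : Set G} (hA : A ∈ I)
    (h1 : (1 : G) ∈ A) : (entourageOf A : Set (X × X)) ∈ actionCoarse G I X :=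
  ⟨fun x => ⟨1, h1, (one_smul G x).symm⟩, A, hA, h1, subset_rfl⟩

theorem isCoarseMap_mul_idealCoarse (hI : IsGroupIdeal I) (hinv : IsInvariantIdeal I) :
    IsCoarseMap (prodCoarse (idealCoarse I) (idealCoarse I)) (idealCoarse I)
      (fun p : G × G => p.1 * p.2) := by
  rintro η ⟨-, ε, ⟨-, A, hA, hA1, hεA⟩, δ, ⟨-, B, hB, hB1, hδB⟩, hη⟩
  refine ⟨entourageOf (A * {x | ∃ g : G, ∃ b ∈ B, x = g⁻¹ * b * g}),
    entourageOf_mem_actionCoarse (hI.mul_mem hA (hinv B hB))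
      (one_mul (1 : G) ▸ Set.mul_mem_mul hA1 ⟨1, 1, hB1, by group⟩), ?_⟩
  rintro ⟨⟨x, y⟩, ⟨x', y'⟩⟩ hp
  obtain ⟨a, ha, rfl : x' = a * x⟩ := hεA (hη hp).1
  obtain ⟨b, hb, rfl : y' = b * y⟩ := hδB (hη hp).2
  refine ⟨a * (x * b * x⁻¹), Set.mul_mem_mul ha ⟨x⁻¹, b, hb, by group⟩, ?_⟩
  simp only [smul_eq_mul]
  group

theorem isCoarseMap_inv_idealCoarse (hI : IsGroupIdeal I) (hinv : IsInvariantIdeal I) :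
    IsCoarseMap (idealCoarse I) (idealCoarse I) (fun x : G => x⁻¹) := by
  rintro ε ⟨-, A, hA, hA1, hεA⟩
  refine ⟨entourageOf {x | ∃ g : G, ∃ b ∈ A⁻¹, x = g⁻¹ * b * g},
    entourageOf_mem_actionCoarse (hinv _ (hI.inv_mem hA)) ⟨1, 1, by simpa using hA1, by group⟩,
    ?_⟩
  rintro ⟨x, y⟩ hxy
  obtain ⟨a, ha, rfl : y = a * x⟩ := hεA hxy
  refine ⟨x⁻¹ * a⁻¹ * x, ⟨x, a⁻¹, by simpa using ha, by group⟩, ?_⟩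
  simp only [smul_eq_mul]
  group

theorem isCoarseGroup_idealCoarse (hI : IsGroupIdeal I) (hinv : IsInvariantIdeal I) :
    IsCoarseGroup (idealCoarse I) :=
  ⟨isCoarseMap_mul_idealCoarse hI hinv, isCoarseMap_inv_idealCoarse hI hinv⟩

end IdealCoarse

/-- A group `G` endowed with a (connected) coarse structure `E` is a coarse group
if and only if `E = E_I` for some invariant group ideal `I` on `G`. -/
theorem isCoarseGroup_iff_exists_invariant_ideal {G : Type*} [Group G]
    (E : Set (Set (G × G))) (hE : IsCoarseStructure E) (hc : IsConnectedCoarse E) :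
    IsCoarseGroup E ↔
      ∃ I : Set (Set G), IsGroupIdeal I ∧ IsInvariantIdeal I ∧ E = idealCoarse I := by
  constructor
  · rintro ⟨hmul, -⟩
    have hl := isLeftCoarseGroup_of_isCoarseMap_mul hE hmul
    have hr := isRightCoarseGroup_of_isCoarseMap_mul hE hmul
    exact ⟨coarseIdeal E, isGroupIdeal_coarseIdeal hE hc hr, isInvariantIdeal_coarseIdeal hl hr,
      (idealCoarse_coarseIdeal hE hr).symm⟩
  · rintro ⟨I, hI, hinv, rfl⟩
    exact isCoarseGroup_idealCoarse hI hinv
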